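/- arXiv:1904.10540 — 7 statements merged into one kernel-verified Lean document; each statement's English description precedes it below -/
import Mathlib

section
/- The Paris–Harrington statement is true: for all k, e, c there exists n such that for every coloring f : [{0,...,n-1}]^e → c there is a subset Y of {0,...,n-1} with |Y| ≥ k, |Y| ≥ min Y, and Y homogeneous for f. -/
/-!
By the infinite Ramsey theorem every finite coloring of the `e`-element subsets of `ℕ` has an
infinite monochromatic set `H`; together with `min H`, any `max k (min H)` further elements of `H`
form a large homogeneous set of size at least `k`. Compactness transfers this to the finite
statement: if every `range n` carried a bad coloring `F n`, an ultrafilter limit `G` of the `F n`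
would agree with infinitely many `F n` on the subsets of any given finite set, so a large
homogeneous set for `G` would be one for some `F n` inside `range n`.
-/

open Finset Filter Set

def Homog {c : ℕ} (f : Finset ℕ → Fin c) (e : ℕ) (Y : Finset ℕ) : Prop :=
  ∀ s ⊆ Y, ∀ t ⊆ Y, s.card = e → t.card = e → f s = f t

theorem Homog.congr {c e : ℕ} {f g : Finset ℕ → Fin c} {Y : Finset ℕ}
    (hfg : ∀ s ⊆ Y, f s = g s) (hg : Homog g e Y) : Homog f e Y :=
  fun s hs t ht hcs hct => by rw [hfg s hs, hfg t ht]; exact hg s hs t ht hcs hct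

section InfiniteRamsey

variable {α : Type*}

def IsMonochromatic (f : Finset ℕ → α) (e : ℕ) (H : Set ℕ) (v : α) : Prop :=
  ∀ s : Finset ℕ, ↑s ⊆ H → #s = e → f s = v

theorem IsMonochromatic.homog {c e : ℕ} {f : Finset ℕ → Fin c} {H : Set ℕ} {v : Fin c}
    (hf : IsMonochromatic f e H v) {Y : Finset ℕ} (hY : ↑Y ⊆ H) : Homog f e Y :=
  fun s hs t ht hcs hct => by
    rw [hf s ((coe_subset.mpr hs).trans hY) hcs, hf t ((coe_subset.mpr ht).trans hY) hct]

/-- An `(e + 1)`-set in the image is `insert (a i) t` with `a i` its least element, so `t ⊆ S i`. -/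
theorem isMonochromatic_image_of_insert {f : Finset ℕ → α} {e : ℕ} {a : ℕ → ℕ}
    (ha : StrictMono a) {S : ℕ → Set ℕ} (hS : ∀ i j, i < j → a j ∈ S i) {col : ℕ → α}
    (hcol : ∀ i, IsMonochromatic (fun s => f (insert (a i) s)) e (S i) (col i)) (v : α) :
    IsMonochromatic f (e + 1) (a '' (col ⁻¹' {v})) v := by
  intro s hs hcard
  have hne : s.Nonempty := card_pos.mp (by omega)
  obtain ⟨i, hi, hai⟩ := hs (s.min'_mem hne)
  have hai_mem : a i ∈ s := hai ▸ s.min'_mem hne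
  have hrest : ↑(s.erase (a i)) ⊆ S i := by
    intro x hx
    obtain ⟨hxi, hxs⟩ := Finset.mem_erase.mp hx
    obtain ⟨j, -, rfl⟩ := hs hxs
    exact hS i j (ha.lt_iff_lt.mp ((hai ▸ s.min'_le _ hxs).lt_of_ne' hxi))
  calc f s = f (insert (a i) (s.erase (a i))) := by rw [insert_erase hai_mem]
    _ = col i := hcol i _ hrest (by rw [card_erase_of_mem hai_mem, hcard]; rfl)
    _ = v := hi

theorem exists_infinite_isMonochromatic [Finite α] (f : Finset ℕ → α) (e : ℕ) {S : Set ℕ}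
    (hS : S.Infinite) : ∃ H ⊆ S, H.Infinite ∧ ∃ v, IsMonochromatic f e H v := by
  induction e generalizing f S with
  | zero => exact ⟨S, subset_rfl, hS, f ∅, fun s _ hs => by rw [card_eq_zero.mp hs]⟩
  | succ e ih =>
    have step (T : Set ℕ) (hT : T.Infinite) : ∃ T' ⊆ T \ Set.Iic (sInf T), T'.Infinite ∧
        ∃ v, IsMonochromatic (fun s => f (insert (sInf T) s)) e T' v :=
      ih _ (hT.sdiff (finite_Iic _))
    -- lets `choose!` make `col` independent of the proof of `T.Infinite`
    have : Nonempty α := ⟨f ∅⟩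
    choose! next hnext_sub hnext_inf col hcol using step
    set T : ℕ → Set ℕ := fun i => next^[i] S
    have hT_succ_eq (i : ℕ) : T (i + 1) = next (T i) := Function.iterate_succ_apply' next i S
    have hT_inf (i : ℕ) : (T i).Infinite := by
      induction i with
      | zero => exact hS
      | succ i ih => exact hT_succ_eq i ▸ hnext_inf _ ih
    have hT_succ (i : ℕ) : T (i + 1) ⊆ T i \ Set.Iic (sInf (T i)) :=
      hT_succ_eq i ▸ hnext_sub _ (hT_inf i)
    have hT_anti : Antitone T := antitone_nat_of_succ_le fun i => (hT_succ i).trans sdiff_subset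
    set a : ℕ → ℕ := fun i => sInf (T i)
    have ha_mem (i : ℕ) : a i ∈ T i := Nat.sInf_mem (hT_inf i).nonempty
    have ha : StrictMono a := strictMono_nat_of_lt_succ fun i =>
      not_le.mp (hT_succ i (ha_mem (i + 1))).2
    obtain ⟨v, hv⟩ := Finite.exists_infinite_fiber fun i => col (T i)
    refine ⟨a '' ((fun i => col (T i)) ⁻¹' {v}), ?_, ?_, v,
      isMonochromatic_image_of_insert ha (fun i j hij => hT_anti hij (ha_mem j))
        (fun i => hT_succ_eq i ▸ hcol _ (hT_inf i)) v⟩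
    · rintro _ ⟨i, -, rfl⟩
      exact hT_anti (Nat.zero_le i) (ha_mem i)
    · exact (Set.infinite_coe_iff.mp hv).image ha.injective.injOn

end InfiniteRamsey

theorem exists_large_homog {c : ℕ} (f : Finset ℕ → Fin c) (k e : ℕ) :
    ∃ Y : Finset ℕ, k ≤ #Y ∧ Y.min ≤ (#Y : WithBot ℕ) ∧ Homog f e Y := by
  obtain ⟨H, -, hH, v, hHv⟩ := exists_infinite_isMonochromatic f e Set.infinite_univ
  set m := sInf H
  obtain ⟨Y, hYH, hY⟩ := hH.exists_subset_card_eq (max k m)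
  have hcard : max k m ≤ #(insert m Y) := hY ▸ card_le_card (subset_insert m Y)
  refine ⟨insert m Y, (le_max_left k m).trans hcard, ?_, hHv.homog ?_⟩
  · exact (min_le (mem_insert_self m Y)).trans
      (WithBot.coe_le_coe.mpr ((le_max_right k m).trans hcard))
  · rw [coe_insert]
    exact insert_subset (Nat.sInf_mem hH.nonempty) hYH

theorem exists_frequently_eqOn_of_colorings {α : Type*} [Finite α] (F : ℕ → Finset ℕ → α) :
    ∃ G : Finset ℕ → α, ∀ Y : Finset ℕ, ∃ᶠ n in atTop, ∀ s ⊆ Y, F n s = G s := by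
  let U := hyperfilter ℕ
  choose G hG using fun s => (U.map fun n => F n s).eq_pure_of_finite
  refine ⟨G, fun Y => ?_⟩
  have hlim (s : Finset ℕ) : ∀ᶠ n in (U : Filter ℕ), F n s = G s := by
    change (fun n => F n s) ⁻¹' {G s} ∈ U
    rw [← Ultrafilter.mem_map, hG s]
    exact Ultrafilter.mem_pure.mpr rfl
  have hY : ∀ᶠ n in (U : Filter ℕ), ∀ s ∈ Y.powerset, F n s = G s :=
    (eventually_all_finset _).mpr fun s _ => hlim s
  exact (hY.frequently.filter_mono (Nat.cofinite_eq_atTop ▸ hyperfilter_le_cofinite)).mono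
    fun n hn s hs => hn s (mem_powerset.mpr hs)

/-- The Paris–Harrington statement: for all `k, e, c` there is `n` such that every
coloring of the `e`-element subsets of `{0,...,n-1}` into `c` colors has a
large (`min Y ≤ |Y|`) homogeneous subset of cardinality at least `k`. -/
theorem stmt1 (k e c : ℕ) :
    ∃ n : ℕ, ∀ f : Finset ℕ → Fin c,
      ∃ Y ⊆ Finset.range n, k ≤ Y.card ∧ Y.min ≤ (Y.card : WithBot ℕ) ∧ Homog f e Y := by
  by_contra! hbad
  choose F hF using hbad
  obtain ⟨G, hG⟩ := exists_frequently_eqOn_of_colorings F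
  obtain ⟨Y, hk, hmin, hYG⟩ := exists_large_homog G k e
  obtain ⟨n, hFG, hn⟩ := ((hG Y).and_eventually (eventually_ge_atTop (Y.sup id + 1))).exists
  exact hF n Y ((subset_range_sup_succ Y).trans (range_subset_range.mpr hn)) hk hmin
    (hYG.congr hFG)
end

section
/- Assuming 12 ↛ (4)^3_2 (Isbell's result), for every k ≥ 3 we have (2k+6) ↛ (k+1)^k_2; that is, there is a 2-coloring of the k-element subsets of {0,...,2k+5} with no homogeneous set of cardinality k+1. -/
/-- `n ↛ (m)^e_c`: there exists a coloring of the `e`-element subsets of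
`{0,...,n-1}` into `c` colors with no homogeneous subset of cardinality `m`. -/
def NoArrow (n m e c : ℕ) : Prop :=
  ∃ f : Finset ℕ → Fin c, ∀ Y ⊆ Finset.range n, Y.card = m → ¬ Homog f e Y

/-!
Negative stepping-up: from a coloring `f` of the `e`-sets of `{0, …, n-1}` without homogeneous
`(e+1)`-sets, color an `(e+1)`-set `t` of `{0, …, n+1}` by `f (t \ {n+1}) + 1` if `n+1 ∈ t`,
else by `f (t \ {n})` if `n ∈ t`, else by `f (t \ {max t})`. An `(e+2)`-set `Y` containing both
`n` and `n+1` is not homogeneous, since `Y \ {n+1}` and `Y \ {n}` get the colors `c` and `c + 1`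
with `c = f (Y \ {n, n+1})`. Otherwise `Y` has a distinguished element `a` (`n+1`, `n` or
`max Y`) such that the color of `insert a s` is determined injectively by `f s` for
`s ⊆ Y \ {a}`, so `Y` is homogeneous only if `Y \ {a}` is homogeneous for `f`.
Each step adds two points, so induction on `k` starting from Isbell's `12 ↛ (4)^3_2` gives the
theorem.
-/

open Finset

lemma not_homog_of_insert {c e : ℕ} {f g : Finset ℕ → Fin c} {φ : Fin c → Fin c}
    (hφ : Function.Injective φ) {Y : Finset ℕ} {a : ℕ} (ha : a ∈ Y)
    (hg : ∀ s ⊆ Y.erase a, g (insert a s) = φ (f s)) (hf : ¬ Homog f e (Y.erase a)) :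
    ¬ Homog g (e + 1) Y := by
  intro hY
  refine hf fun s hs t ht hsc htc => hφ ?_
  have hsa : a ∉ s := fun h => notMem_erase a Y (hs h)
  have hta : a ∉ t := fun h => notMem_erase a Y (ht h)
  rw [← hg s hs, ← hg t ht]
  exact hY _ (insert_subset ha (hs.trans (erase_subset a Y)))
    _ (insert_subset ha (ht.trans (erase_subset a Y)))
    (by rw [card_insert_of_notMem hsa, hsc]) (by rw [card_insert_of_notMem hta, htc])

lemma subset_range_of_subset_range_add_two {n : ℕ} {Y : Finset ℕ} (hY : Y ⊆ range (n + 2))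
    (h0 : n ∉ Y) (h1 : n + 1 ∉ Y) : Y ⊆ range n := by
  intro x hx
  have := mem_range.mp (hY hx)
  have : x ≠ n := fun h => h0 (h ▸ hx)
  have : x ≠ n + 1 := fun h => h1 (h ▸ hx)
  rw [mem_range]
  omega

def stepUpColoring (n : ℕ) (f : Finset ℕ → Fin 2) (t : Finset ℕ) : Fin 2 :=
  if n + 1 ∈ t then f (t.erase (n + 1)) + 1
  else if n ∈ t then f (t.erase n)
  else f (t.erase (t.sup id))

section StepUp

variable {n : ℕ} {f : Finset ℕ → Fin 2} {t : Finset ℕ}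

lemma stepUpColoring_of_succ_mem (h1 : n + 1 ∈ t) :
    stepUpColoring n f t = f (t.erase (n + 1)) + 1 := if_pos h1

lemma stepUpColoring_of_mem (h1 : n + 1 ∉ t) (h0 : n ∈ t) :
    stepUpColoring n f t = f (t.erase n) := by
  rw [stepUpColoring, if_neg h1, if_pos h0]

lemma stepUpColoring_of_notMem (h1 : n + 1 ∉ t) (h0 : n ∉ t) :
    stepUpColoring n f t = f (t.erase (t.sup id)) := by
  rw [stepUpColoring, if_neg h1, if_neg h0]

lemma not_homog_stepUpColoring_of_mem_of_succ_mem {e : ℕ} {Y : Finset ℕ} (hcard : Y.card = e + 1)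
    (h0 : n ∈ Y) (h1 : n + 1 ∈ Y) : ¬ Homog (stepUpColoring n f) e Y := by
  intro hY
  have hcolor := hY _ (erase_subset (n + 1) Y) _ (erase_subset n Y)
    (by rw [card_erase_of_mem h1, hcard]; rfl) (by rw [card_erase_of_mem h0, hcard]; rfl)
  rw [stepUpColoring_of_mem (notMem_erase _ _) (mem_erase.mpr ⟨by omega, h0⟩),
    stepUpColoring_of_succ_mem (mem_erase.mpr ⟨by omega, h1⟩), erase_right_comm] at hcolor
  have hne_succ : ∀ c : Fin 2, c ≠ c + 1 := by decide
  exact hne_succ _ hcolor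

end StepUp

lemma noArrow_add_two {n e : ℕ} (h : NoArrow n (e + 1) e 2) :
    NoArrow (n + 2) (e + 2) (e + 1) 2 := by
  obtain ⟨f, hf⟩ := h
  refine ⟨stepUpColoring n f, fun Y hY hcard => ?_⟩
  have hf' : ∀ a ∈ Y, Y.erase a ⊆ range n → ¬ Homog f e (Y.erase a) := fun a ha hsub =>
    hf _ hsub (by rw [card_erase_of_mem ha, hcard]; rfl)
  have hsub : ∀ a, n ∉ Y.erase a → n + 1 ∉ Y.erase a → Y.erase a ⊆ range n := fun a h0 h1 =>
    subset_range_of_subset_range_add_two ((erase_subset a Y).trans hY) h0 h1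
  have hins : ∀ a ∈ Y, ∀ s ⊆ Y.erase a, insert a s ⊆ Y := fun a ha s hs =>
    insert_subset ha (hs.trans (erase_subset a Y))
  have herase : ∀ a, ∀ s ⊆ Y.erase a, (insert a s).erase a = s := fun a s hs =>
    erase_insert fun h => notMem_erase a Y (hs h)
  by_cases h1 : n + 1 ∈ Y <;> by_cases h0 : n ∈ Y
  · exact not_homog_stepUpColoring_of_mem_of_succ_mem hcard h0 h1
  · refine not_homog_of_insert (φ := (· + 1)) (add_left_injective 1) h1 (fun s hs => ?_)
      (hf' _ h1 (hsub _ (fun h => h0 (mem_of_mem_erase h)) (notMem_erase _ _)))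
    rw [stepUpColoring_of_succ_mem (mem_insert_self _ _), herase _ s hs]
  · refine not_homog_of_insert (φ := id) Function.injective_id h0 (fun s hs => ?_)
      (hf' _ h0 (hsub _ (notMem_erase _ _) (fun h => h1 (mem_of_mem_erase h))))
    rw [stepUpColoring_of_mem (fun h => h1 (hins n h0 s hs h)) (mem_insert_self _ _),
      herase _ s hs, id]
  · have hne : Y.Nonempty := card_pos.mp (by omega)
    set a := Y.max' hne
    have ha : a ∈ Y := Y.max'_mem hne
    refine not_homog_of_insert (φ := id) Function.injective_id ha (fun s hs => ?_)
      (hf' _ ha (hsub _ (fun h => h0 (mem_of_mem_erase h)) (fun h => h1 (mem_of_mem_erase h))))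
    have hsup : (insert a s).sup id = a := by
      rw [sup_insert, id, sup_eq_left]
      exact Finset.sup_le fun x hx => Y.le_max' x (mem_of_mem_erase (hs hx))
    rw [stepUpColoring_of_notMem (fun h => h1 (hins a ha s hs h))
      (fun h => h0 (hins a ha s hs h)), hsup, herase _ s hs, id]

/-- Assuming Isbell's result `12 ↛ (4)^3_2`, for every `k ≥ 3` we have
`(2k+6) ↛ (k+1)^k_2`. -/
theorem stmt3 (h : NoArrow 12 4 3 2) : ∀ k : ℕ, 3 ≤ k → NoArrow (2 * k + 6) (k + 1) k 2 := by
  intro k hk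
  induction k, hk using Nat.le_induction with
  | base => exact h
  | succ k _ ih =>
    rw [show 2 * (k + 1) + 6 = 2 * k + 6 + 2 by ring]
    exact noArrow_add_two ih
end

section
/- Consider the following game with parameters an ordinal δ ≥ ω^(α+1) and a natural number N. Set δ_0 = δ. On the (i+1)-st move Player I chooses a decomposition δ_i = η + ν (ordinal addition) and Player II chooses μ < η, setting δ_{i+1} = μ + ν. Player II wins if δ_N ≥ ω^α. Then Player II has a winning strategy. -/
/-!
Write `w = ω ^ α`. Player II keeps the position at least `w * (m + 1)` while `m` moves remain.
If Player I splits off `η ≥ w * ω`, Player II answers `w * N`, which already suffices.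
Otherwise `w * j < η ≤ w * (j + 1)` for a natural `j`, and Player II answers `w * j`: measured
by the quotient by `w`, the position then drops by at most one, because
`(w * (j + 1) + ν) / w = j + (1 + ν / w) ≤ (j + ν / w) + 1`.
-/

open Ordinal

namespace Ordinal

theorem one_add_le_add_one (q : Ordinal) : 1 + q ≤ q + 1 := by
  rcases lt_or_ge q ω with hq | hq
  · obtain ⟨n, rfl⟩ := lt_omega0.1 hq
    exact (Nat.cast_add_one_comm n).ge
  · rw [one_add_of_omega0_le hq]
    exact le_self_add

theorem mul_le_mul_add_of_mul_add_one_le {w η ν j k : Ordinal} (hw : w ≠ 0)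
    (hη : η ≤ w * (j + 1)) (h : w * (k + 1) ≤ η + ν) : w * k ≤ w * j + ν := by
  have hk : k + 1 ≤ j + ν / w + 1 :=
    calc k + 1 ≤ (η + ν) / w := (mul_le_iff_le_div hw).1 h
      _ ≤ (w * (j + 1) + ν) / w := div_le_left (add_le_add_left hη ν) w
      _ = j + (1 + ν / w) := by rw [mul_add_div _ hw, add_assoc]
      _ ≤ j + ν / w + 1 := by rw [add_assoc]; exact add_le_add_right (one_add_le_add_one _) j
  calc w * k ≤ w * (j + ν / w) :=
        mul_le_mul_right (Order.lt_add_one_iff.1 (Order.add_one_le_iff.1 hk)) w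
    _ = w * j + w * (ν / w) := mul_add _ _ _
    _ ≤ w * j + ν := add_le_add_right (mul_div_le ν w) _

theorem exists_mul_lt_le_mul_add_one {w η : Ordinal} (hη₀ : η ≠ 0) (hη : η < w * ω) :
    ∃ j : ℕ, w * j < η ∧ η ≤ w * (j + 1) := by
  have hw : w ≠ 0 := by rintro rfl; simp at hη
  have hex : ∃ j : ℕ, η ≤ w * (j + 1) := by
    obtain ⟨n, hn⟩ := lt_omega0.1 ((lt_mul_iff_div_lt hw).1 hη)
    exact ⟨n, (lt_mul_succ_div η hw).le.trans_eq (by rw [hn, Order.succ_eq_add_one])⟩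
  classical
  refine ⟨Nat.find hex, ?_, Nat.find_spec hex⟩
  rcases h : Nat.find hex with _ | j
  · simpa using pos_iff_ne_zero.2 hη₀
  · simpa using Nat.find_min hex (by omega : j < Nat.find hex)

def IsSafeReply (w : Ordinal) (N : ℕ) (η μ : Ordinal) : Prop :=
  μ < η ∧ ∀ k : ℕ, k ≤ N → ∀ ν, w * (k + 1) ≤ η + ν → w * k ≤ μ + ν

theorem exists_isSafeReply {w η : Ordinal} (hw : w ≠ 0) (N : ℕ) (hη : η ≠ 0) :
    ∃ μ, IsSafeReply w N η μ := by
  rcases lt_or_ge η (w * ω) with hηω | hηω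
  · obtain ⟨j, hjη, hηj⟩ := exists_mul_lt_le_mul_add_one hη hηω
    exact ⟨w * j, hjη, fun k _ ν h => mul_le_mul_add_of_mul_add_one_le hw hηj h⟩
  · refine ⟨w * N, ?_, fun k hk ν _ => ?_⟩
    · exact ((mul_lt_mul_iff_right₀ (pos_iff_ne_zero.2 hw)).2 (natCast_lt_omega0 N)).trans_le
        hηω
    · exact (mul_le_mul_right (by exact_mod_cast hk) w).trans le_self_add

theorem mul_le_of_isSafeReply {w : Ordinal} {N : ℕ} {reply : Ordinal → Ordinal}
    (hreply : ∀ η ≠ 0, IsSafeReply w N η (reply η)) {d η ν : ℕ → Ordinal}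
    (h₀ : w * (N + 1) ≤ d 0)
    (hplay : ∀ i < N, d i = η i + ν i ∧ η i ≠ 0 ∧ d (i + 1) = reply (η i) + ν i) :
    ∀ i ≤ N, w * ((N - i : ℕ) + 1) ≤ d i
  | 0, _ => by simpa using h₀
  | i + 1, hi => by
    obtain ⟨hdi, hηi, hdi'⟩ := hplay i (by omega)
    rw [hdi', ← Nat.cast_add_one, show N - (i + 1) + 1 = N - i by omega]
    exact (hreply _ hηi).2 _ (Nat.sub_le N i) _
      (hdi ▸ mul_le_of_isSafeReply hreply h₀ hplay i (by omega))

end Ordinal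

/-- Lemma 4.8: in the game where `δ_0 = δ ≥ ω^(α+1)` and at the `(i+1)`-st move
Player I chooses a partition `δ_i = η + ν` and Player II chooses `μ < η`, setting
`δ_{i+1} = μ + ν`, Player II has a strategy guaranteeing `δ_N ≥ ω^α`. -/
theorem stmt4 (α δ : Ordinal) (N : ℕ) (hδ : Ordinal.omega0 ^ (α + 1) ≤ δ) :
    ∃ strat : ℕ → Ordinal → Ordinal,
      (∀ i η, η ≠ 0 → strat i η < η) ∧
      ∀ d η ν : ℕ → Ordinal,
        d 0 = δ →
        (∀ i < N, d i = η i + ν i ∧ η i ≠ 0 ∧ d (i + 1) = strat i (η i) + ν i) →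
        Ordinal.omega0 ^ α ≤ d N := by
  have hw : ω ^ α ≠ 0 := (opow_pos α omega0_pos).ne'
  have hsafe : ∀ η : Ordinal, ∃ μ, η ≠ 0 → IsSafeReply (ω ^ α) N η μ := fun η =>
    if hη : η = 0 then ⟨0, (absurd hη ·)⟩
    else (exists_isSafeReply hw N hη).imp fun _ h _ => h
  choose reply hreply using hsafe
  refine ⟨fun _ => reply, fun _ η hη => (hreply η hη).1, fun d η ν hd₀ hplay => ?_⟩
  have h₀ : ω ^ α * (N + 1) ≤ d 0 := by
    rw [hd₀]
    refine le_trans ?_ ((opow_add_one ω α).symm.trans_le hδ)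
    exact mul_le_mul_right (by exact_mod_cast (natCast_lt_omega0 (N + 1)).le) _
  simpa using mul_le_of_isSafeReply hreply h₀ hplay N le_rfl
end

section
/- Let (P, ≺) be a partial order such that ≺ is well-founded. Define the strict lexicographic order on ≺-descending finite sequences: ⟨a_0,...,a_m⟩ ≺^lex ⟨b_0,...,b_n⟩ iff either there exists k ≤ min(m,n) with a_l = b_l for all l < k and a_k ≺ b_k, or m < n and a_l = b_l for all l ≤ m. Then ≺^lex restricted to strictly ≺-descending sequences (i.e. sequences with a_{i+1} ≺ a_i for all i) is well-founded. -/
/-- The strict lexicographic order on finite sequences: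
`a ≺^lex b` iff either there is a position `k` (within both sequences) where they
first differ and `r (a k) (b k)` holds, or `a` is a proper initial segment of `b`. -/
def DescLexLT {P : Type*} (r : P → P → Prop) (a b : List P) : Prop :=
  (∃ k : ℕ, (∀ l < k, a[l]? = b[l]?) ∧
      ∃ x y, a[k]? = some x ∧ b[k]? = some y ∧ r x y) ∨
  (a.length < b.length ∧ ∀ l < a.length, a[l]? = b[l]?)

private lemma not_descLexLT_nil {P : Type*} (r : P → P → Prop) (a : List P) :
    ¬ DescLexLT r a [] := by
  rintro (⟨k, _, x, y, _, hy, _⟩ | ⟨h, _⟩)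
  · simp at hy
  · simp at h

private lemma acc_of_nil {P : Type*} (r : P → P → Prop)
    (b : {l : List P // l.Chain' fun x y => r y x}) (hb : b.1 = []) :
    Acc (fun a b : {l : List P // l.Chain' fun x y => r y x} =>
      DescLexLT r a.1 b.1) b := by
  constructor
  intro c hc
  rw [hb] at hc
  exact absurd hc (not_descLexLT_nil r c.1)

private lemma acc_cons {P : Type*} (r : P → P → Prop) (hr : WellFounded r)
    (x : P) : ∀ (l : List P) (h : (x :: l).Chain' fun a b => r b a),
    Acc (fun a b : {l : List P // l.Chain' fun x y => r y x} =>
      DescLexLT r a.1 b.1) ⟨x :: l, h⟩ := by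
  set Sub := {l : List P // l.Chain' fun x y => r y x} with hSub
  set RR : Sub → Sub → Prop := fun a b => DescLexLT r a.1 b.1 with hRR
  induction x using hr.induction with
  | _ x ih =>
    -- ih : ∀ y, r y x → ∀ l h, Acc RR ⟨y :: l, h⟩
    have main : ∀ (m : Sub), Acc RR m → ∀ h : ((x :: m.1).Chain' fun a b => r b a),
        Acc RR ⟨x :: m.1, h⟩ := by
      intro m hm
      induction hm with
      | intro m hacc ihm =>
        intro h
        constructor
        rintro ⟨bl, hbchain⟩ hb
        rcases hb with ⟨k, hagree, u, v, hbu, hv, ruv⟩ | ⟨hlen, hagree⟩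
        · cases k with
          | zero =>
            simp only [List.getElem?_cons_zero, Option.some.injEq] at hv
            subst hv
            cases bl with
            | nil => simp at hbu
            | cons u' t =>
              simp only [List.getElem?_cons_zero, Option.some.injEq] at hbu
              subst hbu
              exact ih u' ruv t hbchain
          | succ k =>
            have h0 : bl[0]? = some x := by
              have := hagree 0 (Nat.succ_pos k)
              simpa using this
            cases bl with
            | nil => simp at h0
            | cons y t =>
              simp only [List.getElem?_cons_zero, Option.some.injEq] at h0
              subst h0
              have ht : DescLexLT r t m.1 := by
                left
                refine ⟨k, ?_, u, v, ?_, ?_, ruv⟩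
                · intro l hl
                  have := hagree (l + 1) (by omega)
                  simpa using this
                · simpa using hbu
                · simpa using hv
              have htchain : t.Chain' fun a b => r b a := (List.isChain_cons.1 hbchain).2
              exact ihm ⟨t, htchain⟩ ht hbchain
        · cases bl with
          | nil => exact acc_of_nil r _ rfl
          | cons y t =>
            have h0 : y = x := by
              have := hagree 0 (by simp)
              simpa using this
            subst h0
            have ht : DescLexLT r t m.1 := by
              right
              refine ⟨by simpa using hlen, ?_⟩
              intro l hl
              have := hagree (l + 1) (by simp; omega)
              simpa using this
            have htchain : t.Chain' fun a b => r b a := (List.isChain_cons.1 hbchain).2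
            exact ihm ⟨t, htchain⟩ ht hbchain
    intro l h
    have hl : Acc RR ⟨l, (List.isChain_cons.1 h).2⟩ := by
      cases l with
      | nil => exact acc_of_nil r _ rfl
      | cons z t =>
        have hz : r z x := (List.isChain_cons_cons.1 h).1
        exact ih z hz t (List.isChain_cons_cons.1 h).2
    exact main ⟨l, _⟩ hl h

/-- If `(P, ≺)` is a (strict) partial order with `≺` well-founded, then the
lexicographic order `≺^lex` restricted to strictly `≺`-descending finite
sequences (`a_{i+1} ≺ a_i` for all `i`) is well-founded. -/
theorem stmt6 {P : Type*} (r : P → P → Prop) [IsTrans P r] [IsIrrefl P r]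
    (hr : WellFounded r) :
    WellFounded (fun a b : {l : List P // l.Chain' fun x y => r y x} =>
      DescLexLT r a.1 b.1) := by
  constructor
  rintro ⟨l, hl⟩
  cases l with
  | nil => exact acc_of_nil r _ rfl
  | cons x t => exact acc_cons r hr x t hl
end

section
/- Compactness of fulfilment for finite levels (Lemma 1.1.iii): Let σ = ⟨A_i⟩_{i<ω} be an increasing, closed sequence of subsets of a structure M, with each A_i finite. If for each n < ω the initial segment ⟨A_i⟩_{i≤n} fulfils a formula φ (with given valuation of free variables), then the whole sequence ⟨A_i⟩_{i<ω} fulfils φ. -/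
open FirstOrder FirstOrder.Language FirstOrder.Language.Structure

universe u v w

/-- First-order formulas in negation normal form over the language `L`, with
free variables among `Fin n`. -/
inductive NNF (L : FirstOrder.Language.{u, v}) : ℕ → Type (max u v)
  | rel {n l : ℕ} (R : L.Relations l) (ts : Fin l → L.Term (Fin n)) : NNF L n
  | nrel {n l : ℕ} (R : L.Relations l) (ts : Fin l → L.Term (Fin n)) : NNF L n
  | equal {n : ℕ} (t₁ t₂ : L.Term (Fin n)) : NNF L n
  | nequal {n : ℕ} (t₁ t₂ : L.Term (Fin n)) : NNF L n
  | and {n : ℕ} (φ ψ : NNF L n) : NNF L n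
  | or {n : ℕ} (φ ψ : NNF L n) : NNF L n
  | ex {n : ℕ} (φ : NNF L (n + 1)) : NNF L n
  | all {n : ℕ} (φ : NNF L (n + 1)) : NNF L n

variable {L : FirstOrder.Language.{u, v}} {M : Type w} [L.Structure M]

/-- The fulfilment relation `φ^σ_i`, relative to the sequence of sets `A` with
index set `lenm σ = {i : i < len}`: existential quantifiers are witnessed in the
next level `A (i+1)`, universal quantifiers range over all later levels. -/
def ful (A : ℕ → Set M) (len : ℕ∞) : {n : ℕ} → NNF L n → (Fin n → M) → ℕ → Prop
  | _, .rel R ts, v, _ => RelMap R fun j => (ts j).realize v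
  | _, .nrel R ts, v, _ => ¬ RelMap R fun j => (ts j).realize v
  | _, .equal t₁ t₂, v, _ => t₁.realize v = t₂.realize v
  | _, .nequal t₁ t₂, v, _ => t₁.realize v ≠ t₂.realize v
  | _, .and φ ψ, v, i => ful A len φ v i ∧ ful A len ψ v i
  | _, .or φ ψ, v, i => ful A len φ v i ∨ ful A len ψ v i
  | _, .ex φ, v, i => ∃ x ∈ A (i + 1), ful A len φ (Fin.snoc v x) i
  | _, .all φ, v, i =>
      ∀ j : ℕ, i ≤ j → (j : ℕ∞) < len → ∀ x ∈ A j, ful A len φ (Fin.snoc v x) j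

/-- The sequence `⟨A_i⟩_{i < len}` fulfils `φ` at the valuation `v`: it is
increasing, closed under the functions of `L` (with constants in `A 0`), and
`φ^σ_0` holds. -/
def Fulfils (A : ℕ → Set M) (len : ℕ∞) {n : ℕ} (φ : NNF L n) (v : Fin n → M) : Prop :=
  (∀ i : ℕ, (i : ℕ∞) < len → A i ⊆ A (i + 1)) ∧
  (∀ i : ℕ, (i : ℕ∞) < len → ∀ {l : ℕ} (f : L.Functions l) (x : Fin l → M),
      (∀ j, x j ∈ A i) → funMap f x ∈ A (i + 1)) ∧
  (∀ c : L.Constants, funMap c (fun j : Fin 0 => j.elim0) ∈ A 0) ∧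
  ful A len φ v 0

private lemma ful_key (A : ℕ → Set M) (hfin : ∀ i, (A i).Finite) :
    ∀ {n : ℕ} (φ : NNF L n) (v : Fin n → M) (i : ℕ),
      (∀ N : ℕ, ∃ N' : ℕ, N ≤ N' ∧ ful A (N' : ℕ∞) φ v i) → ful A ⊤ φ v i := by
  intro n φ
  induction φ with
  | rel R ts =>
    intro v i h; obtain ⟨N, _, hN⟩ := h 0; exact hN
  | nrel R ts =>
    intro v i h; obtain ⟨N, _, hN⟩ := h 0; exact hN
  | equal t₁ t₂ =>
    intro v i h; obtain ⟨N, _, hN⟩ := h 0; exact hN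
  | nequal t₁ t₂ =>
    intro v i h; obtain ⟨N, _, hN⟩ := h 0; exact hN
  | and φ ψ ihφ ihψ =>
    intro v i h
    refine ⟨ihφ v i ?_, ihψ v i ?_⟩ <;> intro N <;>
      obtain ⟨N', hle, h1, h2⟩ := h N
    · exact ⟨N', hle, h1⟩
    · exact ⟨N', hle, h2⟩
  | or φ ψ ihφ ihψ =>
    intro v i h
    by_cases hcof : ∀ N : ℕ, ∃ N' : ℕ, N ≤ N' ∧ ful A (N' : ℕ∞) φ v i
    · exact Or.inl (ihφ v i hcof)
    · push_neg at hcof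
      obtain ⟨N₀, hN₀⟩ := hcof
      refine Or.inr (ihψ v i ?_)
      intro N
      obtain ⟨N', hle, hN'⟩ := h (max N N₀)
      refine ⟨N', le_trans (le_max_left _ _) hle, ?_⟩
      rcases hN' with h1 | h2
      · exact absurd h1 (hN₀ N' (le_trans (le_max_right _ _) hle))
      · exact h2
  | ex φ ih =>
    intro v i h
    have claim : ∃ x ∈ A (i + 1),
        ∀ N : ℕ, ∃ N' : ℕ, N ≤ N' ∧ ful A (N' : ℕ∞) φ (Fin.snoc v x) i := by
      by_contra hc
      push_neg at hc
      have hch : ∀ x : M, ∃ B : ℕ, x ∈ A (i + 1) →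
          ∀ N' : ℕ, B ≤ N' → ¬ ful A (N' : ℕ∞) φ (Fin.snoc v x) i := by
        intro x
        by_cases hx : x ∈ A (i + 1)
        · obtain ⟨B, hB⟩ := hc x hx
          exact ⟨B, fun _ => hB⟩
        · exact ⟨0, fun hx' => absurd hx' hx⟩
      choose f hf using hch
      set S := (hfin (i + 1)).toFinset with hS
      set B := S.sup f with hB
      obtain ⟨N', hle, hN'⟩ := h B
      obtain ⟨x, hx, hxful⟩ := hN'
      have hxS : x ∈ S := (Set.Finite.mem_toFinset _).mpr hx
      exact hf x hx N' (le_trans (Finset.le_sup hxS) hle) hxful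
    obtain ⟨x, hx, hcof⟩ := claim
    exact ⟨x, hx, ih (Fin.snoc v x) i hcof⟩
  | all φ ih =>
    intro v i h
    intro j hij _ x hx
    apply ih (Fin.snoc v x) j
    intro N
    obtain ⟨N', hle, hN'⟩ := h (max N (j + 1))
    have hjN' : (j : ℕ∞) < (N' : ℕ∞) := by
      exact_mod_cast lt_of_lt_of_le (Nat.lt_succ_self j)
        (le_trans (le_max_right _ _) hle)
    exact ⟨N', le_trans (le_max_left _ _) hle, hN' j hij hjN' x hx⟩

/-- Lemma 1.1.iii (compactness of fulfilment for finite levels): if each `A_i`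
is finite and for every `N` the initial segment `⟨A_i⟩_{i ≤ N}` fulfils `φ`,
then the whole sequence `⟨A_i⟩_{i<ω}` fulfils `φ`. -/
theorem stmt14 {n : ℕ} (A : ℕ → Set M) (hfin : ∀ i, (A i).Finite)
    (φ : NNF L n) (v : Fin n → M)
    (h : ∀ N : ℕ, Fulfils A (N : ℕ∞) φ v) :
    Fulfils A ⊤ φ v := by
  refine ⟨fun i _ => (h (i + 1)).1 i (by exact_mod_cast Nat.lt_succ_self i),
    fun i _ => (h (i + 1)).2.1 i (by exact_mod_cast Nat.lt_succ_self i),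
    (h 0).2.2.1, ?_⟩
  exact ful_key A hfin φ v 0 fun N => ⟨N, le_refl N, (h N).2.2.2⟩
end

section
/- Truth from unbounded fulfilment (Lemma 1.1.i): if σ = ⟨A_i⟩_{i∈I} is an increasing, function-closed sequence of subsets of a structure M with I having no maximal element, and σ fulfils a sentence φ (in negation normal form), then φ is true in the substructure B of M with domain ⋃_{i∈I} A_i. -/
open FirstOrder FirstOrder.Language FirstOrder.Language.Structure

universe u v w

variable {L : FirstOrder.Language.{u, v}} {M : Type w} [L.Structure M]

/-- Ordinary (Tarskian) truth of an NNF formula in a structure. -/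
def NNF.Realize {N : Type*} [L.Structure N] : {n : ℕ} → NNF L n → (Fin n → N) → Prop
  | _, .rel R ts, v => RelMap R fun j => (ts j).realize v
  | _, .nrel R ts, v => ¬ RelMap R fun j => (ts j).realize v
  | _, .equal t₁ t₂, v => t₁.realize v = t₂.realize v
  | _, .nequal t₁ t₂, v => t₁.realize v ≠ t₂.realize v
  | _, .and φ ψ, v => NNF.Realize φ v ∧ NNF.Realize ψ v
  | _, .or φ ψ, v => NNF.Realize φ v ∨ NNF.Realize ψ v
  | _, .ex φ, v => ∃ x : N, NNF.Realize φ (Fin.snoc v x)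
  | _, .all φ, v => ∀ x : N, NNF.Realize φ (Fin.snoc v x)

/-- Each value of a universally quantified variable lies in some `A j`; since the levels are
unbounded and increasing, the fulfilment clause applies to it at level `max i j`. -/
theorem NNF.realize_of_ful {A : ℕ → Set M} (hA : Monotone A) {S : L.Substructure M}
    (hS : (S : Set M) = ⋃ i, A i) {n : ℕ} (φ : NNF L n) (v : Fin n → S) (i : ℕ)
    (hφ : ful A ⊤ φ ((↑) ∘ v) i) : φ.Realize v := by
  induction φ generalizing i with
  | rel R ts =>
    simp only [ful, realize_term_substructure] at hφ
    exact hφ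
  | nrel R ts =>
    simp only [ful, realize_term_substructure] at hφ
    exact hφ
  | equal t₁ t₂ => simpa [ful, NNF.Realize] using hφ
  | nequal t₁ t₂ => simpa [ful, NNF.Realize] using hφ
  | and φ ψ ihφ ihψ => exact ⟨ihφ v i hφ.1, ihψ v i hφ.2⟩
  | or φ ψ ihφ ihψ => exact hφ.imp (ihφ v i) (ihψ v i)
  | ex φ ih =>
    obtain ⟨x, hxA, hx⟩ := hφ
    have hxS : x ∈ (S : Set M) := hS ▸ Set.mem_iUnion.2 ⟨i + 1, hxA⟩
    refine ⟨⟨x, hxS⟩, ih _ i ?_⟩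
    rwa [Fin.comp_snoc]
  | all φ ih =>
    intro x
    obtain ⟨j, hxA⟩ : ∃ j, (x : M) ∈ A j := Set.mem_iUnion.1 (hS ▸ x.2)
    refine ih _ (max i j) ?_
    rw [Fin.comp_snoc]
    exact hφ _ (le_max_left i j) (ENat.natCast_lt_top _) x (hA (le_max_right i j) hxA)

/-- Lemma 1.1.i (truth from unbounded fulfilment): if the increasing,
function-closed sequence `⟨A_i⟩_{i<ω}` fulfils the sentence `φ`, then `φ` is
true in the substructure of `M` with domain `⋃_i A_i`. -/
theorem stmt15 (A : ℕ → Set M) (φ : NNF L 0)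
    (h : Fulfils A ⊤ φ (fun i => i.elim0))
    (S : L.Substructure M) (hS : (S : Set M) = ⋃ i, A i) :
    NNF.Realize (N := ↥S) φ (fun i => i.elim0) := by
  obtain ⟨hsucc, -, -, hφ⟩ := h
  have hA : Monotone A := monotone_nat_of_le_succ fun i => hsucc i (ENat.natCast_lt_top i)
  refine φ.realize_of_ful hA hS _ 0 ?_
  convert hφ using 2
end

section
/- Rank bound for fulfilment of contradictions (Lemma 2.2): define the rank of a first-order formula by: quantifier-free formulas have rank 0, Boolean combinations of formulas of rank ≤ k have rank k, and Qx θ has rank k+1 if θ has rank k. If θ has rank k, then the conjunction θ ∧ ¬θ is not (k+1)-fulfillable: no sequence σ = ⟨A_0,...,A_{k+1}⟩ of subsets of any structure, with any valuation of free variables, fulfils θ ∧ ¬θ. -/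
open FirstOrder FirstOrder.Language FirstOrder.Language.Structure

universe u v w

variable {L : FirstOrder.Language.{u, v}} {M : Type w} [L.Structure M]

/-- The negation of an NNF formula, obtained by dualizing. -/
def NNF.neg : {n : ℕ} → NNF L n → NNF L n
  | _, .rel R ts => .nrel R ts
  | _, .nrel R ts => .rel R ts
  | _, .equal t₁ t₂ => .nequal t₁ t₂
  | _, .nequal t₁ t₂ => .equal t₁ t₂
  | _, .and φ ψ => .or (NNF.neg φ) (NNF.neg ψ)
  | _, .or φ ψ => .and (NNF.neg φ) (NNF.neg ψ)
  | _, .ex φ => .all (NNF.neg φ)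
  | _, .all φ => .ex (NNF.neg φ)

/-- The rank of a formula: quantifier-free formulas have rank `0`, Boolean
combinations of formulas of rank `≤ k` have rank `k`, and a quantifier adds 1. -/
def NNF.rank : {n : ℕ} → NNF L n → ℕ
  | _, .rel _ _ => 0
  | _, .nrel _ _ => 0
  | _, .equal _ _ => 0
  | _, .nequal _ _ => 0
  | _, .and φ ψ => max (NNF.rank φ) (NNF.rank ψ)
  | _, .or φ ψ => max (NNF.rank φ) (NNF.rank ψ)
  | _, .ex φ => NNF.rank φ + 1
  | _, .all φ => NNF.rank φ + 1

lemma chainA (A : ℕ → Set M) (len : ℕ∞)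
    (hA : ∀ i : ℕ, (i : ℕ∞) < len → A i ⊆ A (i + 1)) :
    ∀ {i j : ℕ}, i ≤ j → (j : ℕ∞) ≤ len → A i ⊆ A j := by
  intro i j hij hj
  induction j with
  | zero => simp [Nat.le_zero.mp hij]
  | succ m ih =>
    have hm : (m : ℕ∞) < len :=
      lt_of_lt_of_le (by exact_mod_cast Nat.lt_succ_self m) hj
    rcases Nat.lt_or_ge i (m + 1) with h | h
    · exact (ih (Nat.lt_succ_iff.mp h) hm.le).trans (hA m hm)
    · have : i = m + 1 := le_antisymm hij h
      simp [this]

lemma ful_mono (A : ℕ → Set M) (len : ℕ∞)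
    (hA : ∀ i : ℕ, (i : ℕ∞) < len → A i ⊆ A (i + 1)) :
    ∀ {n : ℕ} (φ : NNF L n) (v : Fin n → M) {i j : ℕ}, i ≤ j → (j : ℕ∞) < len →
      ful A len φ v i → ful A len φ v j := by
  intro n φ
  induction φ with
  | rel R ts => intro v i j _ _ h; exact h
  | nrel R ts => intro v i j _ _ h; exact h
  | equal t₁ t₂ => intro v i j _ _ h; exact h
  | nequal t₁ t₂ => intro v i j _ _ h; exact h
  | and φ ψ ihφ ihψ =>
    intro v i j hij hj h
    exact ⟨ihφ v hij hj h.1, ihψ v hij hj h.2⟩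
  | or φ ψ ihφ ihψ =>
    intro v i j hij hj h
    exact h.elim (fun h => Or.inl (ihφ v hij hj h)) (fun h => Or.inr (ihψ v hij hj h))
  | ex φ ih =>
    intro v i j hij hj h
    obtain ⟨x, hx, hful⟩ := h
    have hj' : ((j : ℕ) + 1 : ℕ∞) ≤ len := by
      rw [show ((j : ℕ) + 1 : ℕ∞) = ((j + 1 : ℕ) : ℕ∞) by push_cast; ring]
      exact Order.add_one_le_of_lt hj
    refine ⟨x, chainA A len hA (Nat.succ_le_succ hij) (by exact_mod_cast hj') hx,
      ih _ hij hj hful⟩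
  | all φ ih =>
    intro v i j hij hj h
    intro j' hj' hlen x hx
    exact h j' (le_trans hij hj') hlen x hx

lemma ful_neg_contra (A : ℕ → Set M) (len : ℕ∞)
    (hA : ∀ i : ℕ, (i : ℕ∞) < len → A i ⊆ A (i + 1)) :
    ∀ {n : ℕ} (φ : NNF L n) (v : Fin n → M) (i : ℕ),
      ((i + NNF.rank φ : ℕ) : ℕ∞) < len →
      ful A len φ v i → ful A len (NNF.neg φ) v i → False := by
  intro n φ
  induction φ with
  | rel R ts => intro v i _ h h'; exact h' h
  | nrel R ts => intro v i _ h h'; exact h h'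
  | equal t₁ t₂ => intro v i _ h h'; exact h' h
  | nequal t₁ t₂ => intro v i _ h h'; exact h h'
  | and φ ψ ihφ ihψ =>
    intro v i hlt h h'
    rcases h' with h' | h'
    · exact ihφ v i (lt_of_le_of_lt (Nat.cast_le.mpr (Nat.add_le_add_left (le_max_left _ _) i)) hlt) h.1 h'
    · exact ihψ v i (lt_of_le_of_lt (Nat.cast_le.mpr (Nat.add_le_add_left (le_max_right _ _) i)) hlt) h.2 h'
  | or φ ψ ihφ ihψ =>
    intro v i hlt h h'
    rcases h with h | h
    · exact ihφ v i (lt_of_le_of_lt (Nat.cast_le.mpr (Nat.add_le_add_left (le_max_left _ _) i)) hlt) h h'.1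
    · exact ihψ v i (lt_of_le_of_lt (Nat.cast_le.mpr (Nat.add_le_add_left (le_max_right _ _) i)) hlt) h h'.2
  | ex φ ih =>
    intro v i hlt h h'
    obtain ⟨x, hx, hful⟩ := h
    have hi1 : ((i + 1 : ℕ) : ℕ∞) < len :=
      lt_of_le_of_lt (Nat.cast_le.mpr (Nat.add_le_add_left (Nat.succ_le_succ (Nat.zero_le _)) i)) hlt
    have hφmono := ful_mono A len hA φ (Fin.snoc v x) (Nat.le_succ i) hi1 hful
    have hneg := h' (i + 1) (Nat.le_succ i) hi1 x hx
    have hlt' : ((i + 1 + NNF.rank φ : ℕ) : ℕ∞) < len := by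
      rw [show i + 1 + NNF.rank φ = i + (NNF.rank φ + 1) by ring]
      exact hlt
    exact ih (Fin.snoc v x) (i + 1) hlt' hφmono hneg
  | all φ ih =>
    intro v i hlt h h'
    obtain ⟨x, hx, hful⟩ := h'
    have hi1 : ((i + 1 : ℕ) : ℕ∞) < len :=
      lt_of_le_of_lt (Nat.cast_le.mpr (Nat.add_le_add_left (Nat.succ_le_succ (Nat.zero_le _)) i)) hlt
    have hnegmono := ful_mono A len hA (NNF.neg φ) (Fin.snoc v x) (Nat.le_succ i) hi1 hful
    have hpos := h (i + 1) (Nat.le_succ i) hi1 x hx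
    have hlt' : ((i + 1 + NNF.rank φ : ℕ) : ℕ∞) < len := by
      rw [show i + 1 + NNF.rank φ = i + (NNF.rank φ + 1) by ring]
      exact hlt
    exact ih (Fin.snoc v x) (i + 1) hlt' hpos hnegmono

/-- Lemma 2.2: if `θ` has rank `k` then `θ ∧ ¬θ` is not `(k+1)`-fulfillable:
no sequence `⟨A_0, ..., A_{k+1}⟩` of subsets of any structure, with any
valuation of the free variables, fulfils `θ ∧ ¬θ`. -/
theorem stmt16 {n k : ℕ} (φ : NNF L n) (hk : NNF.rank φ ≤ k)
    (A : ℕ → Set M) (v : Fin n → M) :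
    ¬ Fulfils A ((k + 1 : ℕ) : ℕ∞) (NNF.and φ (NNF.neg φ)) v := by
  rintro ⟨hA, -, -, hful⟩
  have hlt : ((0 + NNF.rank φ : ℕ) : ℕ∞) < ((k + 1 : ℕ) : ℕ∞) := by
    exact_mod_cast Nat.lt_succ_of_le (by simpa using hk)
  exact ful_neg_contra A _ hA φ v 0 hlt hful.1 hful.2
end
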